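/- The function u(x) := (1+x)^{−x} = exp(−x · Log(1+x)), where Log is the principal branch of the logarithm, belongs to X_α for every α ∈ (0,2] (in particular u ∈ X_1). -/

import Mathlib

/-!
For `Re x ≥ 0` we have `|u(x)| = exp(Im x · arg(1+x) − Re x · log|1+x|)` with `|arg(1+x)| ≤ π/2`
and `|1+x| ≥ max(1, |x|)`, so `|u(x)| ≤ exp(π|x|/2 − Re x · log|x|)`. Since `ζ ≤ π/2`, every
closed subsector `|arg x| ≤ ζ − ε` lies in the half-plane and satisfies `Re x ≥ sin ε · |x|`;
there the term `sin ε · |x| log|x|` eventually absorbs twice `π|x|/2`, which gives the bound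
`|x|^{−(sin ε / 2)|x|}` at infinity, while near `0` the exponent is at most `π/2`.
-/

/-- `ζ = (π/2) min(1, 1/α)`. -/
noncomputable def zeta (α : ℝ) : ℝ := Real.pi / 2 * min 1 (1 / α)

/-- The class `X_α` of test functions: `u` is analytic in the sector `|arg x| < ζ`,
real-valued on `(0, ∞)`, and for every `ε ∈ (0, ζ)` there is `δ > 0` such that
`|u(x)| = O(|x|^{-δ|x|})` as `|x| → ∞` and `|u(x)| = O(1)` as `|x| → 0`, uniformly
in the sector `|arg x| ≤ ζ - ε`. -/
def MemX (α : ℝ) (u : ℂ → ℂ) : Prop :=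
  (∀ x : ℂ, x ≠ 0 → |Complex.arg x| < zeta α → AnalyticAt ℂ u x) ∧
  (∀ t : ℝ, 0 < t → (u t).im = 0) ∧
  (∀ ε : ℝ, 0 < ε → ε < zeta α → ∃ δ > 0, ∃ C > 0, ∃ r > 0, ∃ R > 0,
    (∀ x : ℂ, x ≠ 0 → |Complex.arg x| ≤ zeta α - ε → ‖x‖ ≤ r → ‖u x‖ ≤ C) ∧
    (∀ x : ℂ, x ≠ 0 → |Complex.arg x| ≤ zeta α - ε → R ≤ ‖x‖ →
      ‖u x‖ ≤ C * ‖x‖ ^ (-δ * ‖x‖)))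

open Complex Real

lemma zeta_le_pi_div_two (α : ℝ) : zeta α ≤ π / 2 :=
  mul_le_of_le_one_right (by positivity) (min_le_left _ _)

namespace Complex

lemma norm_mul_cos_le_re {x : ℂ} {φ : ℝ} (hφ : φ ≤ π) (h : |arg x| ≤ φ) :
    ‖x‖ * Real.cos φ ≤ x.re := by
  rw [← norm_mul_cos_arg x, ← Real.cos_abs x.arg]
  exact mul_le_mul_of_nonneg_left
    (Real.cos_le_cos_of_nonneg_of_le_pi (abs_nonneg _) hφ h) (norm_nonneg x)

lemma norm_le_norm_one_add {x : ℂ} (hx : 0 ≤ x.re) : ‖x‖ ≤ ‖1 + x‖ := by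
  rw [← sq_le_sq₀ (norm_nonneg _) (norm_nonneg _), Complex.sq_norm, Complex.sq_norm,
    normSq_apply, normSq_apply]
  simp only [add_re, one_re, add_im, one_im, zero_add]
  nlinarith

lemma one_le_norm_one_add {x : ℂ} (hx : 0 ≤ x.re) : 1 ≤ ‖1 + x‖ :=
  calc 1 ≤ (1 + x).re := by simp only [add_re, one_re]; linarith
    _ ≤ ‖1 + x‖ := re_le_norm _

lemma one_add_mem_slitPlane {x : ℂ} (hx : -1 < x.re) : 1 + x ∈ slitPlane :=
  mem_slitPlane_iff.2 <| Or.inl <| by simp only [add_re, one_re]; linarith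

lemma analyticAt_exp_neg_mul_log_one_add {x : ℂ} (hx : 1 + x ∈ slitPlane) :
    AnalyticAt ℂ (fun z ↦ exp (-z * log (1 + z))) x :=
  (analyticAt_id.neg.mul ((analyticAt_const.add analyticAt_id).clog hx)).cexp

lemma exp_neg_mul_log_one_add_ofReal_im {t : ℝ} (ht : -1 ≤ t) :
    (exp (-t * log (1 + t))).im = 0 := by
  rw [← ofReal_one, ← ofReal_add, ← ofReal_log (by linarith), ← ofReal_neg, ← ofReal_mul,
    exp_ofReal_im]

lemma norm_exp_neg_mul_log_one_add (x : ℂ) :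
    ‖exp (-x * log (1 + x))‖ = Real.exp (x.im * arg (1 + x) - x.re * Real.log ‖1 + x‖) := by
  rw [norm_exp, neg_mul, neg_re, mul_re, log_re, log_im]
  ring_nf

lemma norm_exp_neg_mul_log_one_add_le {x : ℂ} (hx : -1 ≤ x.re) :
    ‖exp (-x * log (1 + x))‖ ≤ Real.exp (π / 2 * ‖x‖ - x.re * Real.log ‖1 + x‖) := by
  rw [norm_exp_neg_mul_log_one_add]
  refine Real.exp_le_exp.2 (sub_le_sub_right ?_ _)
  calc x.im * arg (1 + x) ≤ |x.im| * |arg (1 + x)| := (le_abs_self _).trans (abs_mul _ _).le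
    _ ≤ ‖x‖ * (π / 2) := mul_le_mul (abs_im_le_norm x)
        (abs_arg_le_pi_div_two_iff.2 (by simp only [add_re, one_re]; linarith))
        (abs_nonneg _) (norm_nonneg _)
    _ = π / 2 * ‖x‖ := mul_comm _ _

lemma norm_exp_neg_mul_log_one_add_le_exp_pi_div_two {x : ℂ} (hx : 0 ≤ x.re) (h : ‖x‖ ≤ 1) :
    ‖exp (-x * log (1 + x))‖ ≤ Real.exp (π / 2) := by
  refine (norm_exp_neg_mul_log_one_add_le (by linarith)).trans (Real.exp_le_exp.2 ?_)
  have := mul_nonneg hx (Real.log_nonneg (one_le_norm_one_add hx))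
  nlinarith [pi_pos]

lemma norm_exp_neg_mul_log_one_add_le_rpow {x : ℂ} {c : ℝ} (hc : 0 < c) (hre : c * ‖x‖ ≤ x.re)
    (hR : Real.exp (π / c) ≤ ‖x‖) :
    ‖exp (-x * log (1 + x))‖ ≤ ‖x‖ ^ (-(c / 2) * ‖x‖) := by
  have hx : 0 < ‖x‖ := (Real.exp_pos _).trans_le hR
  have hre0 : 0 ≤ x.re := (mul_nonneg hc.le hx.le).trans hre
  have hlog : π / c ≤ Real.log ‖x‖ := (Real.le_log_iff_exp_le hx).2 hR
  have hgrowth : c * ‖x‖ * Real.log ‖x‖ ≤ x.re * Real.log ‖1 + x‖ :=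
    mul_le_mul hre (Real.log_le_log hx (norm_le_norm_one_add hre0))
      ((div_nonneg pi_pos.le hc.le).trans hlog) hre0
  have hπ : π ≤ c * Real.log ‖x‖ := (div_le_iff₀' hc).1 hlog
  rw [Real.rpow_def_of_pos hx]
  refine (norm_exp_neg_mul_log_one_add_le (by linarith)).trans (Real.exp_le_exp.2 ?_)
  nlinarith

end Complex

theorem stmt6_general (α : ℝ) :
    MemX α (fun x : ℂ => Complex.exp (-x * Complex.log (1 + x))) := by
  have hζ := zeta_le_pi_div_two α
  refine ⟨fun x hx harg ↦ ?_, fun t ht ↦ exp_neg_mul_log_one_add_ofReal_im (by linarith),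
    fun ε hε hεζ ↦ ?_⟩
  · have hre : 0 < x.re := (abs_arg_lt_pi_div_two_iff.1 (harg.trans_le hζ)).resolve_right hx
    exact analyticAt_exp_neg_mul_log_one_add (one_add_mem_slitPlane (by linarith))
  have hsin : 0 < Real.sin ε := Real.sin_pos_of_pos_of_lt_pi hε (by linarith [pi_pos])
  have hsector (x : ℂ) (hx : |arg x| ≤ zeta α - ε) : Real.sin ε * ‖x‖ ≤ x.re := by
    simpa [Real.cos_pi_div_two_sub, mul_comm] using
      norm_mul_cos_le_re (φ := π / 2 - ε) (by linarith) (by linarith)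
  refine ⟨Real.sin ε / 2, by positivity, Real.exp (π / 2), Real.exp_pos _, 1, one_pos,
    Real.exp (π / Real.sin ε), Real.exp_pos _, fun x _ harg hx ↦ ?_, fun x _ harg hx ↦ ?_⟩
  · exact norm_exp_neg_mul_log_one_add_le_exp_pi_div_two
      ((mul_nonneg hsin.le (norm_nonneg x)).trans (hsector x harg)) hx
  · exact (norm_exp_neg_mul_log_one_add_le_rpow hsin (hsector x harg) hx).trans
      (le_mul_of_one_le_left (by positivity) (Real.one_le_exp (by positivity)))

/-- The function `u(x) = (1+x)^{-x} = exp(-x Log(1+x))` (principal logarithm)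
belongs to `X_α` for every `α ∈ (0, 2]`. -/
theorem stmt6 (α : ℝ) (hα1 : 0 < α) (hα2 : α ≤ 2) :
    MemX α (fun x : ℂ => Complex.exp (-x * Complex.log (1 + x))) :=
  stmt6_general α
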